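/- Closed form of the forward diffusion process (one-dimensional): Fix T ∈ ℕ and noise variances β_1, …, β_T ∈ (0, 1); set α_t = 1 − β_t and ᾱ_t = ∏_{s=1}^{t} α_s. Let ε_1, …, ε_T be independent standard Gaussian random variables, fix e_0 ∈ ℝ, and define the process e_t = √α_t · e_{t−1} + √β_t · ε_t for t = 1, …, T. Then for every t ∈ {1, …, T}, the law of e_t is the Gaussian measure on ℝ with mean √ᾱ_t · e_0 and variance 1 − ᾱ_t; equivalently, e_t has the same law as √ᾱ_t · e_0 + √(1 − ᾱ_t) · ε for ε a standard Gaussian. -/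

import Mathlib

/-!
Induction on `t`. The process `e t` is a measurable function of the noises `ε i` with
`i < t`, so it is independent of the fresh noise `ε t`. An independent sum of Gaussians is
Gaussian, and the step `x ↦ √(1 - β) x + √β ε` sends `N(√ᾱ e₀, 1 - ᾱ)` to
`N(√(ᾱ (1 - β)) e₀, 1 - ᾱ (1 - β))` since `(1 - β)(1 - ᾱ) + β = 1 - ᾱ (1 - β)`.
-/

open MeasureTheory ProbabilityTheory
open scoped NNReal

namespace ProbabilityTheory

variable {Ω : Type*} {mΩ : MeasurableSpace Ω} {μ : Measure Ω}

lemma iIndepFun.indepFun_of_measurable_iSup_comap {ι β γ : Type*} [mβ : MeasurableSpace β]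
    [MeasurableSpace γ] {f : ι → Ω → β} (hf : iIndepFun f μ) (hfm : ∀ i, Measurable (f i))
    {S : Set ι} {j : ι} (hj : j ∉ S) {X : Ω → γ}
    (hX : Measurable[⨆ i ∈ S, mβ.comap (f i)] X) :
    IndepFun X (f j) μ := by
  have h := indep_iSup_of_disjoint (fun i => (hfm i).comap_le) ((iIndepFun_iff_iIndep _ _ _).mp hf)
    (Set.disjoint_singleton_right.mpr hj)
  rw [iSup_singleton] at h
  exact indep_of_indep_of_le_left h hX.comap_le

lemma HasLaw.const_mul_add_const_mul_gaussianReal {X Y : Ω → ℝ} {m₁ m₂ : ℝ} {v₁ v₂ : ℝ≥0}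
    (hX : HasLaw X (gaussianReal m₁ v₁) μ) (hY : HasLaw Y (gaussianReal m₂ v₂) μ)
    (hXY : IndepFun X Y μ) (c d : ℝ) :
    HasLaw (fun ω => c * X ω + d * Y ω)
      (gaussianReal (c * m₁ + d * m₂) (‖c‖₊ ^ 2 * v₁ + ‖d‖₊ ^ 2 * v₂)) μ where
  aemeasurable := by fun_prop
  map_eq := by
    have hsq (a : ℝ) : ‖a‖₊ ^ 2 = .mk (a ^ 2) (sq_nonneg a) := by ext; simp
    rw [hsq, hsq]
    exact gaussianReal_add_gaussianReal_of_indepFun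
      (hXY.comp (measurable_const_mul c) (measurable_const_mul d))
      (gaussianReal_const_mul hX c).map_eq (gaussianReal_const_mul hY d).map_eq

lemma HasLaw.sqrt_one_sub_mul_add_sqrt_mul_gaussianReal {X Y : Ω → ℝ} {a b x : ℝ}
    (ha : a ≤ 1) (hb₀ : 0 ≤ b) (hb₁ : b ≤ 1)
    (hX : HasLaw X (gaussianReal (Real.sqrt a * x) (1 - a).toNNReal) μ)
    (hY : HasLaw Y (gaussianReal 0 1) μ) (hXY : IndepFun X Y μ) :
    HasLaw (fun ω => Real.sqrt (1 - b) * X ω + Real.sqrt b * Y ω)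
      (gaussianReal (Real.sqrt (a * (1 - b)) * x) (1 - a * (1 - b)).toNNReal) μ := by
  convert hX.const_mul_add_const_mul_gaussianReal hY hXY (Real.sqrt (1 - b)) (Real.sqrt b)
    using 2
  · rw [Real.sqrt_mul' _ (by linarith)]
    ring
  · have hvar : 0 ≤ 1 - a * (1 - b) := by
      nlinarith [mul_nonneg (sub_nonneg.2 ha) (sub_nonneg.2 hb₁)]
    ext
    push_cast
    rw [Real.norm_eq_abs, Real.norm_eq_abs, sq_abs, sq_abs, Real.sq_sqrt (by linarith),
      Real.sq_sqrt hb₀, Real.coe_toNNReal _ (sub_nonneg.2 ha), Real.coe_toNNReal _ hvar]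
    ring

end ProbabilityTheory

section ForwardDiffusion

variable {Ω : Type*} {mΩ : MeasurableSpace Ω} {T : ℕ} {β : ℕ → ℝ} {ε : Fin T → Ω → ℝ}
  {e₀ : ℝ} {e : ℕ → Ω → ℝ}

lemma measurable_iSup_comap_noise_of_forward_diffusion (hinit : e 0 = fun _ => e₀)
    (hstep : ∀ i : Fin T, e (i.val + 1) =
      fun ω => Real.sqrt (1 - β (i.val + 1)) * e i.val ω
        + Real.sqrt (β (i.val + 1)) * ε i ω) :
    ∀ n ≤ T, Measurable[⨆ i ∈ {i : Fin T | i.val < n}, MeasurableSpace.comap (ε i) inferInstance]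
      (e n) := by
  intro n
  induction n with
  | zero => intro _; rw [hinit]; exact measurable_const
  | succ n ih =>
    intro hn
    have hpast : (⨆ i ∈ {i : Fin T | i.val < n}, MeasurableSpace.comap (ε i) inferInstance) ≤
        ⨆ i ∈ {i : Fin T | i.val < n + 1}, MeasurableSpace.comap (ε i) inferInstance :=
      biSup_mono fun i (hi : i.val < n) => Nat.lt_succ_of_lt hi
    have hnoise : Measurable[⨆ i ∈ {i : Fin T | i.val < n + 1},
        MeasurableSpace.comap (ε i) inferInstance] (ε ⟨n, hn⟩) :=
      (comap_measurable _).mono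
        (le_biSup (fun i => MeasurableSpace.comap (ε i) inferInstance) (Nat.lt_succ_self n)) le_rfl
    rw [hstep ⟨n, hn⟩]
    exact (((ih (by omega)).mono hpast le_rfl).const_mul _).add (hnoise.const_mul _)

lemma hasLaw_gaussianReal_of_forward_diffusion (μ : Measure Ω) [IsProbabilityMeasure μ]
    (hβ : ∀ t ∈ Finset.Icc 1 T, β t ∈ Set.Icc (0 : ℝ) 1)
    (hεm : ∀ i, Measurable (ε i)) (hindep : iIndepFun ε μ)
    (hε : ∀ i, Measure.map (ε i) μ = gaussianReal 0 1)
    (hinit : e 0 = fun _ => e₀)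
    (hstep : ∀ i : Fin T, e (i.val + 1) =
      fun ω => Real.sqrt (1 - β (i.val + 1)) * e i.val ω
        + Real.sqrt (β (i.val + 1)) * ε i ω) :
    ∀ n ≤ T, HasLaw (e n)
      (gaussianReal (Real.sqrt (∏ s ∈ Finset.Icc 1 n, (1 - β s)) * e₀)
        (1 - ∏ s ∈ Finset.Icc 1 n, (1 - β s)).toNNReal) μ := by
  intro n
  induction n with
  | zero => intro _; simp [hinit, gaussianReal_zero_var, hasLaw_dirac_iff]
  | succ n ih =>
    intro hn
    obtain ⟨hβ₀, hβ₁⟩ := hβ (n + 1) (Finset.mem_Icc.mpr ⟨by omega, hn⟩)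
    have hβ' : ∀ s ∈ Finset.Icc 1 n, β s ∈ Set.Icc (0 : ℝ) 1 :=
      fun s hs => hβ s (Finset.Icc_subset_Icc_right (by omega) hs)
    have hprod : ∏ s ∈ Finset.Icc 1 n, (1 - β s) ≤ 1 :=
      Finset.prod_le_one (fun s hs => sub_nonneg.2 (hβ' s hs).2)
        (fun s hs => sub_le_self _ (hβ' s hs).1)
    have hindep_n : IndepFun (e n) (ε ⟨n, hn⟩) μ :=
      hindep.indepFun_of_measurable_iSup_comap hεm (lt_irrefl n)
        (measurable_iSup_comap_noise_of_forward_diffusion hinit hstep n (by omega))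
    rw [hstep ⟨n, hn⟩, Finset.prod_Icc_succ_top (by omega)]
    exact (ih (by omega)).sqrt_one_sub_mul_add_sqrt_mul_gaussianReal hprod hβ₀ hβ₁
      ⟨(hεm _).aemeasurable, hε _⟩ hindep_n

end ForwardDiffusion

/-- **Closed form of the forward diffusion process (one-dimensional).** Let
`β 1, …, β T ∈ (0,1)`, set `α t = 1 - β t` and `ᾱ t = ∏_{s=1}^t α s`. Let
`ε 0, …, ε (T-1)` be independent standard Gaussians (where `ε i` is the noise added at
step `t = i + 1`), let `e 0 = e₀`, and let `e t = √(α t) * e (t-1) + √(β t) * ε_t`.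
Then for every `t ∈ {1, …, T}`, the law of `e t` is Gaussian with mean `√(ᾱ t) * e₀`
and variance `1 - ᾱ t`. -/
theorem forward_diffusion_closed_form
    {Ω : Type*} [MeasurableSpace Ω] (μ : Measure Ω) [IsProbabilityMeasure μ]
    (T : ℕ) (β : ℕ → ℝ) (hβ : ∀ t ∈ Finset.Icc 1 T, β t ∈ Set.Ioo (0 : ℝ) 1)
    (ε : Fin T → Ω → ℝ) (hεm : ∀ i, Measurable (ε i))
    (hindep : iIndepFun ε μ)
    (hε : ∀ i, Measure.map (ε i) μ = gaussianReal 0 1)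
    (e₀ : ℝ) (e : ℕ → Ω → ℝ)
    (hinit : e 0 = fun _ => e₀)
    (hstep : ∀ i : Fin T, e (i.val + 1) =
      fun ω => Real.sqrt (1 - β (i.val + 1)) * e i.val ω
        + Real.sqrt (β (i.val + 1)) * ε i ω) :
    ∀ t ∈ Finset.Icc 1 T,
      Measure.map (e t) μ =
        gaussianReal (Real.sqrt (∏ s ∈ Finset.Icc 1 t, (1 - β s)) * e₀)
          (1 - ∏ s ∈ Finset.Icc 1 t, (1 - β s)).toNNReal :=
  fun t ht => (hasLaw_gaussianReal_of_forward_diffusion μ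
    (fun s hs => Set.Ioo_subset_Icc_self (hβ s hs)) hεm hindep hε hinit hstep t
    (Finset.mem_Icc.mp ht).2).map_eq
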